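/- arXiv:1606.07727 — 6 statements merged into one kernel-verified Lean document; each statement's English description precedes it below -/
import Mathlib

section
/- Let r > 1 be real and define F_r(x) = ∫_{2r}^x (log log √(rt) − log log √(t/r))/log t dt for x ≥ 2r. Then F_r is concave on [2r, ∞), i.e., its derivative (log log √(rx) − log log √(x/r))/log x is non-increasing in x for x ≥ 2r. -/
/-! With `u = log x` and `a = log r` the halvings inside the logarithms cancel, and the function
becomes `(log (u + a) - log (u - a)) / u`. For `0 ≤ a < u` this numerator is nonnegative and
decreasing in `u` (cross-multiply: `(v + a)(u - a) ≤ (u + a)(v - a)` iff `a u ≤ a v`), so dividing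
by the increasing positive `u` keeps it decreasing; composing with the increasing `log` concludes. -/

open Real Set

lemma log_add_sub_log_sub_nonneg {a u : ℝ} (ha : 0 ≤ a) (hu : a < u) :
    0 ≤ log (u + a) - log (u - a) :=
  sub_nonneg.2 (log_le_log (by linarith) (by linarith))

lemma antitoneOn_log_add_sub_log_sub {a : ℝ} (ha : 0 ≤ a) :
    AntitoneOn (fun u => log (u + a) - log (u - a)) (Ioi a) := by
  intro u hu v hv huv
  simp only [mem_Ioi] at hu hv
  have hcross : (v + a) * (u - a) ≤ (u + a) * (v - a) := by nlinarith
  have hlog := log_le_log (by nlinarith) hcross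
  rw [log_mul (by linarith) (by linarith), log_mul (by linarith) (by linarith)] at hlog
  linarith

lemma antitoneOn_log_add_sub_log_sub_div {a : ℝ} (ha : 0 ≤ a) :
    AntitoneOn (fun u => (log (u + a) - log (u - a)) / u) (Ioi a) := by
  intro u hu v hv huv
  exact div_le_div₀ (log_add_sub_log_sub_nonneg ha hu)
    (antitoneOn_log_add_sub_log_sub ha hu hv huv) (ha.trans_lt hu) huv

lemma log_log_sqrt_mul_sub_log_log_sqrt_div {r x : ℝ} (hr : 1 < r) (hx : r < x) :
    log (log √(r * x)) - log (log √(x / r)) = log (log x + log r) - log (log x - log r) := by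
  have hr0 : 0 < r := by linarith
  have hx0 : 0 < x := by linarith
  have hlr : 0 < log r := log_pos hr
  have hlt : log r < log x := log_lt_log hr0 hx
  rw [log_sqrt (by positivity), log_sqrt (by positivity), log_mul hr0.ne' hx0.ne',
    log_div hx0.ne' hr0.ne', log_div (by linarith) two_ne_zero, log_div (by linarith) two_ne_zero,
    add_comm (log r)]
  ring

theorem stmt_1 (r : ℝ) (hr : 1 < r) :
    AntitoneOn
      (fun x : ℝ =>
        (Real.log (Real.log (Real.sqrt (r * x))) -
          Real.log (Real.log (Real.sqrt (x / r)))) / Real.log x)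
      (Set.Ici (2 * r)) := by
  have hr0 : 0 < r := by linarith
  have hIci : Ici (2 * r) ⊆ Ioi r := Ici_subset_Ioi.2 (by linarith)
  have hcomp : AntitoneOn ((fun u => (log (u + log r) - log (u - log r)) / u) ∘ log) (Ioi r) :=
    (antitoneOn_log_add_sub_log_sub_div (log_pos hr).le).comp_MonotoneOn
      (strictMonoOn_log.monotoneOn.mono (Ioi_subset_Ioi hr0.le)) fun x hx => log_lt_log hr0 hx
  refine (hcomp.mono hIci).congr fun x hx => ?_
  simp only [Function.comp_apply, log_log_sqrt_mul_sub_log_log_sqrt_div hr (hIci hx)]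
end

section
/- Let r > 1 be real, x ≥ 4, and S a set of primes with counting function π_S. Then ∑_{√(x/r) < p ≤ √x, p ∈ S} Li(x/p) = π_S(√x)·Li(√x) − π_S(√(x/r))·Li(√(rx)) + ∫_{√x}^{√(rx)} π_S(x/t)/log t dt. -/
open Real Finset
open scoped Classical

noncomputable def Li (x : ℝ) : ℝ := if x < 2 then 0 else ∫ t in (2:ℝ)..x, 1 / Real.log t

/-- Counting function of the primes in `S` up to `y`. -/
noncomputable def piS (S : Set ℕ) (y : ℝ) : ℕ :=
  ((Finset.range (Nat.floor y + 1)).filter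
    (fun p => Nat.Prime p ∧ p ∈ S ∧ (p : ℝ) ≤ y)).card

/-!
Put `a = √x`, `b = √(rx)`, `c = √(x/r)`, so that `c < a < b` and `c b = a² = x`, and let `F` be
the set of primes of `S` in `(c, a]`. For `t ∈ [a, b]` we have `x/t ∈ [c, a]`, hence
`π_S(x/t) = π_S(c) + #{p ∈ F : t ≤ x/p}`, where each `x/p` lies in `[a, b]`. Integrating this step
function against `1/log t` gives `π_S(c) (Li b - Li a) + ∑_{p ∈ F} (Li (x/p) - Li a)`, and
`π_S(a) = π_S(c) + #F` turns this into the identity.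
-/

open MeasureTheory

lemma intervalIntegrable_one_div_log {u v : ℝ} (hu : 1 < u) (hv : 1 < v) :
    IntervalIntegrable (fun t => 1 / Real.log t) volume u v := by
  refine ContinuousOn.intervalIntegrable fun t ht => ?_
  have ht1 : 1 < t := lt_of_lt_of_le (lt_min hu hv) ht.1
  exact (continuousAt_const.div (continuousAt_log (by positivity))
    (log_pos ht1).ne').continuousWithinAt

lemma Li_sub_Li {u v : ℝ} (hu : 2 ≤ u) (hv : 2 ≤ v) :
    Li v - Li u = ∫ t in u..v, 1 / Real.log t := by
  have hint : ∀ w, 2 ≤ w → IntervalIntegrable (fun t => 1 / Real.log t) volume 2 w :=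
    fun w hw => intervalIntegrable_one_div_log one_lt_two (by linarith)
  rw [Li, Li, if_neg hu.not_gt, if_neg hv.not_gt]
  exact intervalIntegral.integral_interval_sub_left (hint v hv) (hint u hu)

lemma integral_const_add_card_filter_le_mul {ι : Type*} (C : ℝ) (F : Finset ι) (s : ι → ℝ)
    {f : ℝ → ℝ} {a b : ℝ} (hf : IntervalIntegrable f volume a b)
    (hs : ∀ i ∈ F, s i ∈ Set.Icc a b) :
    ∫ t in a..b, (C + #(F.filter (fun i => t ≤ s i))) * f t =
      C * (∫ t in a..b, f t) + ∑ i ∈ F, ∫ t in a..s i, f t := by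
  have hterm : ∀ t, (C + #(F.filter (fun i => t ≤ s i))) * f t =
      C * f t + ∑ i ∈ F, Set.indicator {t | t ≤ s i} f t := by
    intro t
    simp only [add_mul, card_filter, Nat.cast_sum, Nat.cast_ite, Nat.cast_one, Nat.cast_zero,
      sum_mul, ite_mul, one_mul, zero_mul, Set.indicator_apply, Set.mem_ofPred_eq]
  have hind : ∀ i ∈ F, IntervalIntegrable (Set.indicator {t | t ≤ s i} f) volume a b :=
    fun i _ => ⟨hf.1.indicator measurableSet_Iic, hf.2.indicator measurableSet_Iic⟩
  have hsum := IntervalIntegrable.sum F hind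
  rw [sum_fn] at hsum
  simp_rw [hterm]
  rw [intervalIntegral.integral_add (hf.const_mul C) hsum, intervalIntegral.integral_const_mul,
    intervalIntegral.integral_finsetSum hind, add_right_inj]
  exact sum_congr rfl fun i hi => intervalIntegral.integral_indicator (hs i hi)

noncomputable def primesIoc (S : Set ℕ) (u v : ℝ) : Finset ℕ :=
  (range (Nat.floor v + 1)).filter (fun p => Nat.Prime p ∧ p ∈ S ∧ u < (p : ℝ) ∧ (p : ℝ) ≤ v)

lemma mem_range_floor_add_one {p : ℕ} {y : ℝ} (h : (p : ℝ) ≤ y) : p ∈ range (Nat.floor y + 1) :=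
  mem_range.2 (Nat.lt_succ_of_le (Nat.le_floor h))

lemma mem_primesIoc {S : Set ℕ} {u v : ℝ} {p : ℕ} :
    p ∈ primesIoc S u v ↔ Nat.Prime p ∧ p ∈ S ∧ u < (p : ℝ) ∧ (p : ℝ) ≤ v := by
  rw [primesIoc, mem_filter, and_iff_right_iff_imp]
  exact fun h => mem_range_floor_add_one h.2.2.2

lemma piS_eq_piS_add_card_primesIoc (S : Set ℕ) {u v : ℝ} (huv : u ≤ v) :
    piS S v = piS S u + #(primesIoc S u v) := by
  unfold piS
  rw [← card_union_of_disjoint]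
  · congr 1
    ext p
    simp only [mem_union, mem_filter, mem_primesIoc]
    constructor
    · rintro ⟨-, hp, hpS, hpv⟩
      by_cases hpu : (p : ℝ) ≤ u
      · exact Or.inl ⟨mem_range_floor_add_one hpu, hp, hpS, hpu⟩
      · exact Or.inr ⟨hp, hpS, not_le.1 hpu, hpv⟩
    · rintro (⟨-, hp, hpS, hpu⟩ | ⟨hp, hpS, -, hpv⟩)
      · exact ⟨mem_range_floor_add_one (hpu.trans huv), hp, hpS, hpu.trans huv⟩
      · exact ⟨mem_range_floor_add_one hpv, hp, hpS, hpv⟩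
  · refine disjoint_left.2 fun p hpu hpuv => ?_
    exact (mem_primesIoc.1 hpuv).2.2.1.not_ge (mem_filter.1 hpu).2.2.2

lemma piS_div_eq_piS_add_card_filter {S : Set ℕ} {x a b c t : ℝ} (hc : 0 < c) (ha0 : 0 < a)
    (ha : a * a = x) (hcb : c * b = x) (hat : a ≤ t) (htb : t ≤ b) :
    piS S (x / t) = piS S c + #((primesIoc S c a).filter (fun p : ℕ => t ≤ x / p)) := by
  have ht : 0 < t := ha0.trans_le hat
  have hc_le : c ≤ x / t := by rw [le_div_iff₀ ht]; nlinarith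
  rw [piS_eq_piS_add_card_primesIoc S hc_le]
  congr 2
  ext p
  simp only [mem_filter, mem_primesIoc]
  constructor
  · rintro ⟨hp, hpS, hcp, hpt⟩
    have hp0 : (0 : ℝ) < p := hc.trans hcp
    rw [le_div_iff₀ ht] at hpt
    exact ⟨⟨hp, hpS, hcp, by nlinarith⟩, by rw [le_div_iff₀ hp0]; linarith⟩
  · rintro ⟨⟨hp, hpS, hcp, -⟩, htp⟩
    rw [le_div_iff₀ (hc.trans hcp)] at htp
    exact ⟨hp, hpS, hcp, by rw [le_div_iff₀ ht]; linarith⟩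

lemma integral_piS_div_div_log {S : Set ℕ} {x a b c : ℝ} (hc : 0 < c) (ha : 2 ≤ a) (hab : a ≤ b)
    (haa : a * a = x) (hcb : c * b = x) :
    ∫ t in a..b, (piS S (x / t) : ℝ) / Real.log t =
      piS S c * (Li b - Li a) + ∑ p ∈ primesIoc S c a, (Li (x / p) - Li a) := by
  have hf := intervalIntegrable_one_div_log (u := a) (v := b) (by linarith) (by linarith)
  have hsplit : Set.EqOn (fun t => (piS S (x / t) : ℝ) / Real.log t)
      (fun t => (piS S c + #((primesIoc S c a).filter (fun p : ℕ => t ≤ x / p))) *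
        (1 / Real.log t)) (Set.uIcc a b) := by
    intro t ht
    rw [Set.uIcc_of_le hab] at ht
    simp only [piS_div_eq_piS_add_card_filter hc (by linarith) haa hcb ht.1 ht.2, Nat.cast_add,
      mul_one_div]
  have hbounds : ∀ p ∈ primesIoc S c a, (x / p : ℝ) ∈ Set.Icc a b := by
    intro p hp
    obtain ⟨-, -, hcp, hpa⟩ := mem_primesIoc.1 hp
    have hp0 : (0 : ℝ) < p := hc.trans hcp
    exact ⟨by rw [le_div_iff₀ hp0]; nlinarith, by rw [div_le_iff₀ hp0]; nlinarith⟩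
  rw [intervalIntegral.integral_congr hsplit,
    integral_const_add_card_filter_le_mul _ _ _ hf hbounds, Li_sub_Li ha (ha.trans hab),
    add_right_inj]
  exact sum_congr rfl fun p hp => (Li_sub_Li ha (ha.trans (hbounds p hp).1)).symm

theorem stmt_8_general (r x : ℝ) (hr : 1 < r) (hx : 4 ≤ x)
    (S : Set ℕ) :
    (∑ p ∈ (Finset.range (Nat.floor (Real.sqrt x) + 1)).filter
        (fun p => Nat.Prime p ∧ p ∈ S ∧ Real.sqrt (x / r) < (p : ℝ) ∧ (p : ℝ) ≤ Real.sqrt x),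
        Li (x / p)) =
      (piS S (Real.sqrt x) : ℝ) * Li (Real.sqrt x)
        - (piS S (Real.sqrt (x / r)) : ℝ) * Li (Real.sqrt (r * x))
        + ∫ t in (Real.sqrt x)..(Real.sqrt (r * x)), (piS S (x / t) : ℝ) / Real.log t := by
  have hx0 : 0 < x := by linarith
  have ha : 2 ≤ √x := Real.le_sqrt_of_sq_le (by linarith)
  have hc : 0 < √(x / r) := Real.sqrt_pos.2 (by positivity)
  have hca : √(x / r) ≤ √x := Real.sqrt_le_sqrt (div_le_self hx0.le hr.le)
  have hab : √x ≤ √(r * x) := Real.sqrt_le_sqrt (le_mul_of_one_le_left hx0.le hr.le)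
  have hcb : √(x / r) * √(r * x) = x := by
    rw [← Real.sqrt_mul (by positivity), show x / r * (r * x) = x * x by field_simp,
      Real.sqrt_mul_self hx0.le]
  change ∑ p ∈ primesIoc S (√(x / r)) (√x), Li (x / p) = _
  rw [integral_piS_div_div_log hc ha hab (Real.mul_self_sqrt hx0.le) hcb,
    piS_eq_piS_add_card_primesIoc S hca, sum_sub_distrib, sum_const, nsmul_eq_mul]
  push_cast
  ring

theorem stmt_8 (r x : ℝ) (hr : 1 < r) (hx : 4 ≤ x)
    (S : Set ℕ) (hS : ∀ p ∈ S, Nat.Prime p) :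
    (∑ p ∈ (Finset.range (Nat.floor (Real.sqrt x) + 1)).filter
        (fun p => Nat.Prime p ∧ p ∈ S ∧ Real.sqrt (x / r) < (p : ℝ) ∧ (p : ℝ) ≤ Real.sqrt x),
        Li (x / p)) =
      (piS S (Real.sqrt x) : ℝ) * Li (Real.sqrt x)
        - (piS S (Real.sqrt (x / r)) : ℝ) * Li (Real.sqrt (r * x))
        + ∫ t in (Real.sqrt x)..(Real.sqrt (r * x)), (piS S (x / t) : ℝ) / Real.log t :=
  stmt_8_general r x hr hx S
end

section
/- For every positive integer j, μ(j) := min{k ≥ 2j−1 : (2j−1)!·(2j−1) divides k!} satisfies μ(j) ≤ 4j−2, with equality if and only if 2j−1 is a prime number. -/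
/-! Write `n = 2j − 1`. Since `n ∣ n!`, we have `n! · n ∣ n! · n! ∣ (2n)!`, so `μ(j) ≤ 2n`. If `n` is
composite (and odd, so `n ≠ 4`), then `n = a · b` with `a + b < n`, whence `n ∣ a! · b! ∣ (n − 1)!` and
`n! · n ∣ n! · (n − 1)! ∣ (2n − 1)!`, so `μ(j) < 2n`. If `n = p` is prime, then `p² ∣ p! · p ∣ μ(j)!`,
while by Legendre's formula the exponent of `p` in `k!` is `⌊k/p⌋ ≤ 1` for `k < 2p ≤ p²`. -/

open Nat

/-- `μ(j)`: least `k ≥ 2j−1` with `(2j−1)!·(2j−1) ∣ k!`. -/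
noncomputable def mu (j : ℕ) : ℕ :=
  sInf {k : ℕ | 2 * j - 1 ≤ k ∧ (Nat.factorial (2 * j - 1) * (2 * j - 1)) ∣ Nat.factorial k}

theorem Nat.Prime.two_mul_le_of_sq_dvd_factorial {p k : ℕ} (hp : p.Prime) (h : p ^ 2 ∣ k !) :
    2 * p ≤ k := by
  by_contra! hk
  have hlog : Nat.log p k < 2 := Nat.log_lt_of_lt_pow' two_ne_zero (by nlinarith [hp.two_le])
  rw [hp.pow_dvd_factorial_iff hlog] at h
  have : k / p < 2 := Nat.div_lt_of_lt_mul (by omega)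
  simp only [Nat.Ico_succ_singleton, Finset.sum_singleton, pow_one] at h
  omega

theorem Nat.Prime.two_mul_le_of_factorial_mul_self_dvd {p k : ℕ} (hp : p.Prime)
    (h : p ! * p ∣ k !) : 2 * p ≤ k :=
  hp.two_mul_le_of_sq_dvd_factorial <|
    (pow_two p ▸ Nat.mul_dvd_mul_right (Nat.dvd_factorial hp.pos le_rfl) p).trans h

theorem mul_dvd_factorial_mul_sub_one {a b : ℕ} (ha : 2 ≤ a) (hb : 2 ≤ b) (hab : a * b ≠ 4) :
    a * b ∣ (a * b - 1)! := by
  have hsum : a + b ≤ a * b - 1 := by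
    obtain h5 | ⟨rfl, rfl⟩ : 5 ≤ a + b ∨ a = 2 ∧ b = 2 := by omega
    · have : a + b + 1 ≤ a * b := by nlinarith
      omega
    · exact absurd rfl hab
  calc a * b ∣ a ! * b ! := Nat.mul_dvd_mul (Nat.dvd_factorial (by omega) le_rfl)
          (Nat.dvd_factorial (by omega) le_rfl)
    _ ∣ (a + b)! := Nat.factorial_mul_factorial_dvd_factorial_add a b
    _ ∣ (a * b - 1)! := Nat.factorial_dvd_factorial hsum

theorem dvd_factorial_sub_one_of_not_prime {n : ℕ} (hn : 0 < n) (hnp : ¬ n.Prime) (h4 : n ≠ 4) :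
    n ∣ (n - 1)! := by
  obtain rfl | hn1 := (Nat.succ_le_of_lt hn).eq_or_lt
  · exact one_dvd _
  obtain ⟨a, ⟨b, rfl⟩, ha, hab⟩ := Nat.exists_dvd_of_not_prime2 hn1 hnp
  have hb : 2 ≤ b := by
    by_contra!
    interval_cases b <;> omega
  exact mul_dvd_factorial_mul_sub_one ha hb h4

theorem factorial_mul_self_dvd_factorial_two_mul {n : ℕ} (hn : 0 < n) :
    n ! * n ∣ (2 * n)! :=
  two_mul n ▸ (Nat.mul_dvd_mul_left _ (Nat.dvd_factorial hn le_rfl)).trans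
    (Nat.factorial_mul_factorial_dvd_factorial_add n n)

theorem factorial_mul_self_dvd_factorial_two_mul_sub_one {n : ℕ} (hn : 0 < n) (hnp : ¬ n.Prime)
    (h4 : n ≠ 4) : n ! * n ∣ (2 * n - 1)! :=
  (show n + (n - 1) = 2 * n - 1 by omega) ▸
    (Nat.mul_dvd_mul_left _ (dvd_factorial_sub_one_of_not_prime hn hnp h4)).trans
      (Nat.factorial_mul_factorial_dvd_factorial_add n (n - 1))

theorem mu_le {j k : ℕ} (hk : 2 * j - 1 ≤ k) (h : (2 * j - 1)! * (2 * j - 1) ∣ k !) :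
    mu j ≤ k :=
  Nat.sInf_le ⟨hk, h⟩

theorem factorial_mul_dvd_factorial_mu {j : ℕ} (hj : 1 ≤ j) :
    (2 * j - 1)! * (2 * j - 1) ∣ (mu j)! :=
  (Nat.sInf_mem (s := {k | 2 * j - 1 ≤ k ∧ (2 * j - 1)! * (2 * j - 1) ∣ k !})
    ⟨_, by omega, factorial_mul_self_dvd_factorial_two_mul (by omega)⟩).2

theorem stmt_12 (j : ℕ) (hj : 1 ≤ j) :
    mu j ≤ 4 * j - 2 ∧ (mu j = 4 * j - 2 ↔ Nat.Prime (2 * j - 1)) := by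
  have h4j : 4 * j - 2 = 2 * (2 * j - 1) := by omega
  have hle : mu j ≤ 2 * (2 * j - 1) :=
    mu_le (by omega) (factorial_mul_self_dvd_factorial_two_mul (by omega))
  rw [h4j]
  refine ⟨hle, fun heq => ?_, fun hp => ?_⟩
  · by_contra hnp
    have := mu_le (by omega)
      (factorial_mul_self_dvd_factorial_two_mul_sub_one (by omega) hnp (by omega))
    omega
  · exact hle.antisymm <|
      hp.two_mul_le_of_factorial_mul_self_dvd (factorial_mul_dvd_factorial_mu hj)
end

section
/- Let c > 0 and 0 < ε < 1, and set c(ε) = (1−ε)c/√2. Then there is a constant C (depending on c and ε) such that for all x ≥ 16, ∑_{p ≤ √x} p · e^{−c√(log p)} ≤ C · x · e^{−c(ε)√(log x)}, where the sum is over primes p ≤ √x. -/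
open Real Finset
open scoped Classical

/-!
Writing `p = e^t`, each term is `exp (t - c √t)` with `0 ≤ t ≤ (log x) / 2`. As a function of
`s = √t` the exponent `s² - c s` is convex, so it is at most its larger endpoint value: `0`, or
`(log x)/2 - (c/√2) √(log x)`. Both are at most `A²/2 + (log x)/2 - A √(log x)` for
`A = c(ε) ≤ c/√2`, the first because `(√(log x) - A)² ≥ 0`. So every term is `≪ √x e^{-A √(log x)}`, and there are at
most `2 √x` of them.
-/

theorem sq_sub_mul_le_max {s S : ℝ} (c : ℝ) (hs : 0 ≤ s) (hsS : s ≤ S) :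
    s ^ 2 - c * s ≤ max 0 (S ^ 2 - c * S) := by
  rcases le_or_gt c (s + S) with h | h
  · exact le_max_of_le_right (by nlinarith)
  · exact le_max_of_le_left (by nlinarith)

theorem sub_mul_sqrt_le {t L c A : ℝ} (hA : A ≤ c / √2) (ht : 0 ≤ t) (htL : t ≤ L / 2) :
    t - c * √t ≤ A ^ 2 / 2 + (L / 2 - A * √L) := by
  have hL : 0 ≤ L := by linarith
  have hsqrt_half : √(L / 2) = √L / √2 := Real.sqrt_div' L (by norm_num)
  have hmax := sq_sub_mul_le_max c (Real.sqrt_nonneg t) (Real.sqrt_le_sqrt htL)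
  rw [Real.sq_sqrt ht, Real.sq_sqrt (by linarith)] at hmax
  refine hmax.trans (max_le ?_ ?_)
  · nlinarith [sq_nonneg (√L - A), Real.sq_sqrt hL]
  · have : A * √L ≤ c * √(L / 2) := by
      rw [hsqrt_half, mul_div_left_comm, mul_comm]
      exact mul_le_mul_of_nonneg_left hA (Real.sqrt_nonneg L)
    nlinarith [sq_nonneg A]

theorem mul_exp_neg_mul_sqrt_log_le {x y c A : ℝ} (hA : A ≤ c / √2) (hy : 1 ≤ y)
    (hyx : y ≤ √x) :
    y * exp (-c * √(log y)) ≤ exp (A ^ 2 / 2) * √x * exp (-A * √(log x)) := by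
  have hx : 0 < x := by
    by_contra! h
    linarith [Real.sqrt_eq_zero'.mpr h]
  have hsqrt_x : √x = exp (log x / 2) := by
    rw [Real.sqrt_eq_rpow, Real.rpow_def_of_pos hx, mul_one_div]
  have hlog_y : log y ≤ log x / 2 := by
    rw [← Real.log_sqrt hx.le]
    exact Real.log_le_log (by linarith) hyx
  rw [hsqrt_x, ← Real.exp_log (by linarith : 0 < y), ← Real.exp_add, ← Real.exp_add,
    ← Real.exp_add, Real.exp_le_exp, Real.log_exp]
  linarith [sub_mul_sqrt_le hA (Real.log_nonneg hy) hlog_y]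

theorem card_filter_range_floor_add_one_le {x : ℝ} (hx : 1 ≤ x) (P : ℕ → Prop)
    [DecidablePred P] :
    (((range (⌊x⌋₊ + 1)).filter P).card : ℝ) ≤ 2 * x := by
  have hcard : ((range (⌊x⌋₊ + 1)).filter P).card ≤ ⌊x⌋₊ + 1 :=
    (card_filter_le _ _).trans (card_range _).le
  have hfloor : (⌊x⌋₊ : ℝ) ≤ x := Nat.floor_le (by linarith)
  have : (((range (⌊x⌋₊ + 1)).filter P).card : ℝ) ≤ ⌊x⌋₊ + 1 := by exact_mod_cast hcard
  linarith

theorem stmt_13_general (c ε : ℝ) (hc : 0 < c) (hε0 : 0 < ε) :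
    ∃ C : ℝ, 0 < C ∧ ∀ x : ℝ, 16 ≤ x →
      (∑ p ∈ (Finset.range (Nat.floor (Real.sqrt x) + 1)).filter
          (fun p => Nat.Prime p ∧ (p : ℝ) ≤ Real.sqrt x),
          (p : ℝ) * Real.exp (-c * Real.sqrt (Real.log p))) ≤
        C * x * Real.exp (-((1 - ε) * c / Real.sqrt 2) * Real.sqrt (Real.log x)) := by
  set A := (1 - ε) * c / √2
  have hA : A ≤ c / √2 := div_le_div_of_nonneg_right (by nlinarith) (Real.sqrt_nonneg 2)
  refine ⟨2 * exp (A ^ 2 / 2), by positivity, fun x hx => ?_⟩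
  have hsqrt_x : 1 ≤ √x := Real.one_le_sqrt.mpr (by linarith)
  set B := exp (A ^ 2 / 2) * √x * exp (-A * √(log x))
  have hterm : ∀ p ∈ (range (⌊√x⌋₊ + 1)).filter (fun p : ℕ => p.Prime ∧ (p : ℝ) ≤ √x),
      (p : ℝ) * exp (-c * √(log p)) ≤ B := by
    intro p hp
    obtain ⟨-, hp, hpx⟩ := mem_filter.mp hp
    exact mul_exp_neg_mul_sqrt_log_le hA (by exact_mod_cast hp.one_lt.le) hpx
  calc _ ≤ _ • B := sum_le_card_nsmul _ _ B hterm
    _ ≤ 2 * √x * B := by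
        rw [nsmul_eq_mul]
        exact mul_le_mul_of_nonneg_right (card_filter_range_floor_add_one_le hsqrt_x _)
          (by positivity)
    _ = 2 * exp (A ^ 2 / 2) * x * exp (-A * √(log x)) := by
        have hx : √x * √x = x := Real.mul_self_sqrt (by linarith)
        linear_combination 2 * exp (A ^ 2 / 2) * exp (-A * √(log x)) * hx

theorem stmt_13 (c ε : ℝ) (hc : 0 < c) (hε0 : 0 < ε) (hε1 : ε < 1) :
    ∃ C : ℝ, 0 < C ∧ ∀ x : ℝ, 16 ≤ x →
      (∑ p ∈ (Finset.range (Nat.floor (Real.sqrt x) + 1)).filter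
          (fun p => Nat.Prime p ∧ (p : ℝ) ≤ Real.sqrt x),
          (p : ℝ) * Real.exp (-c * Real.sqrt (Real.log p))) ≤
        C * x * Real.exp (-((1 - ε) * c / Real.sqrt 2) * Real.sqrt (Real.log x)) :=
  stmt_13_general c ε hc hε0
end

section
/- Let c > 0, r > 1, 0 < ε < 1 and c(ε) = (1−ε)c/√2. Then there exists a constant C such that for all x ≥ 16, ∑_{√(x/r) < p ≤ √x} (x/p) · e^{−c√(log(x/p))} ≤ C · x · e^{−c(ε)√(log x)}, where the sum is over primes p in the interval (√(x/r), √x]. -/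
/-!
Every prime `p` in `(√(x/r), √x]` satisfies `x/p < √r · √x` and `log (x/p) ≥ (log x)/2`,
so each term is at most `√r · √x · exp(-(c/√2) √(log x))`. There are at most `2√x` terms,
whence the bound with `C = 2√r` even with `c/√2 ≥ c(ε)` in the exponent.
-/

open Real Finset
open scoped Classical

lemma log_div_two_le_log_div {x p : ℝ} (hp : 0 < p) (hpx : p ≤ √x) :
    log x / 2 ≤ log (x / p) := by
  have hx : 0 ≤ x := by
    by_contra! hx
    linarith [Real.sqrt_eq_zero_of_nonpos hx.le]
  have hlogp : log p ≤ log x / 2 := Real.log_sqrt hx ▸ Real.log_le_log hp hpx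
  have hx0 : x ≠ 0 := by
    rintro rfl
    simp at hpx
    linarith
  rw [Real.log_div hx0 hp.ne']
  linarith

lemma exp_neg_mul_sqrt_log_div_le {a c x p : ℝ} (hc : 0 ≤ c) (ha : a ≤ c / √2)
    (hp : 0 < p) (hpx : p ≤ √x) :
    exp (-c * √(log (x / p))) ≤ exp (-a * √(log x)) := by
  rw [Real.exp_le_exp]
  have hsqrt : √(log x) / √2 ≤ √(log (x / p)) := by
    rw [← Real.sqrt_div' _ zero_le_two]
    exact Real.sqrt_le_sqrt (log_div_two_le_log_div hp hpx)
  calc -c * √(log (x / p)) ≤ -c * (√(log x) / √2) :=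
        mul_le_mul_of_nonpos_left hsqrt (neg_nonpos.mpr hc)
    _ = -(c / √2) * √(log x) := by ring
    _ ≤ -a * √(log x) := by gcongr

lemma div_le_sqrt_mul_sqrt {x r p : ℝ} (hx : 0 ≤ x) (hr : 0 < r) (hp : √(x / r) < p) :
    x / p ≤ √r * √x := by
  have hsr : 0 < √r := Real.sqrt_pos.mpr hr
  rw [Real.sqrt_div hx, div_lt_iff₀ hsr] at hp
  have hp0 : 0 < p := by nlinarith [Real.sqrt_nonneg x]
  rw [div_le_iff₀ hp0]
  nlinarith [Real.mul_self_sqrt hx, Real.sqrt_nonneg x]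

lemma natFloor_add_one_le_two_mul {y : ℝ} (hy : 1 ≤ y) : ((⌊y⌋₊ + 1 : ℕ) : ℝ) ≤ 2 * y := by
  push_cast
  linarith [Nat.floor_le (zero_le_one.trans hy)]

theorem stmt_14_general (c r ε : ℝ) (hc : 0 < c) (hr : 1 < r) (hε0 : 0 < ε) :
    ∃ C : ℝ, 0 < C ∧ ∀ x : ℝ, 16 ≤ x →
      (∑ p ∈ (Finset.range (Nat.floor (Real.sqrt x) + 1)).filter
          (fun p => Nat.Prime p ∧ Real.sqrt (x / r) < (p : ℝ) ∧ (p : ℝ) ≤ Real.sqrt x),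
          (x / p) * Real.exp (-c * Real.sqrt (Real.log (x / p)))) ≤
        C * x * Real.exp (-((1 - ε) * c / Real.sqrt 2) * Real.sqrt (Real.log x)) := by
  refine ⟨2 * √r, by positivity, fun x hx => ?_⟩
  set E := exp (-((1 - ε) * c / √2) * √(log x))
  set S := (range (⌊√x⌋₊ + 1)).filter (fun p : ℕ => p.Prime ∧ √(x / r) < (p : ℝ) ∧ (p : ℝ) ≤ √x)
  have hx0 : 0 ≤ x := by linarith
  have hterm : ∀ p ∈ S, x / p * exp (-c * √(log (x / p))) ≤ √r * √x * E := by
    intro p hp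
    obtain ⟨-, hprime, hlow, hhigh⟩ := mem_filter.mp hp
    have hp0 : (0 : ℝ) < p := by exact_mod_cast hprime.pos
    have ha : (1 - ε) * c / √2 ≤ c / √2 := by gcongr; nlinarith
    exact mul_le_mul (div_le_sqrt_mul_sqrt hx0 (by linarith) hlow)
      (exp_neg_mul_sqrt_log_div_le hc.le ha hp0 hhigh) (by positivity) (by positivity)
  have hcard : (S.card : ℝ) ≤ 2 * √x := by
    have hsx : 1 ≤ √x := Real.one_le_sqrt.mpr (by linarith)
    calc (S.card : ℝ) ≤ ((⌊√x⌋₊ + 1 : ℕ) : ℝ) := by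
          exact_mod_cast (card_filter_le _ _).trans_eq (card_range _)
      _ ≤ 2 * √x := natFloor_add_one_le_two_mul hsx
  calc ∑ p ∈ S, x / p * exp (-c * √(log (x / p))) ≤ S.card * (√r * √x * E) := by
        simpa using sum_le_card_nsmul S _ _ hterm
    _ ≤ 2 * √x * (√r * √x * E) := by gcongr
    _ = 2 * √r * (√x * √x) * E := by ring
    _ = 2 * √r * x * E := by rw [Real.mul_self_sqrt hx0]

theorem stmt_14 (c r ε : ℝ) (hc : 0 < c) (hr : 1 < r) (hε0 : 0 < ε) (hε1 : ε < 1) :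
    ∃ C : ℝ, 0 < C ∧ ∀ x : ℝ, 16 ≤ x →
      (∑ p ∈ (Finset.range (Nat.floor (Real.sqrt x) + 1)).filter
          (fun p => Nat.Prime p ∧ Real.sqrt (x / r) < (p : ℝ) ∧ (p : ℝ) ≤ Real.sqrt x),
          (x / p) * Real.exp (-c * Real.sqrt (Real.log (x / p)))) ≤
        C * x * Real.exp (-((1 - ε) * c / Real.sqrt 2) * Real.sqrt (Real.log x)) :=
  stmt_14_general c r ε hc hr hε0
end

section
/- Let r > 1 and define F_r(x) = ∫_{2r}^x (log log √(rt) − log log √(t/r))/log t dt for x ≥ 2r. For each integer m ≥ 1 there is a constant C_m such that for all x ≥ 2r, |F_r(x) − ∑_{ℓ=1}^m (2/(2ℓ−1))·(log r)^{2ℓ−1} · ∫_{2r}^x dt/(log t)^{2ℓ}| ≤ C_m · x · log(2r) · (log r)^{2m+1} / (log x)^{2m+2}. -/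
open Real Finset

lemma aux_sum_odd (u : ℝ) : ∀ m : ℕ, ∑ i ∈ Finset.range (2*m), (u^(i+1) - (-u)^(i+1))/((i:ℝ)+1)
    = ∑ ℓ ∈ Finset.Icc 1 m, (2/(2*(ℓ:ℝ)-1)) * u^(2*ℓ-1) := by
  intro m
  induction m with
  | zero => simp
  | succ m ih =>
    rw [show 2*(m+1) = (2*m+1)+1 by ring, Finset.sum_range_succ, Finset.sum_range_succ, ih,
      Finset.sum_Icc_succ_top (by omega : 1 ≤ m+1)]
    have h1 : (-u)^(2*m+1+1) = u^(2*m+1+1) := by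
      rw [Even.neg_pow (by exact ⟨m+1, by ring⟩)]
    have h2 : (-u)^(2*m+1) = -(u^(2*m+1)) := by
      rw [Odd.neg_pow (by exact ⟨m, by ring⟩)]
    rw [h1, h2, show 2*(m+1)-1 = 2*m+1 by omega]
    push_cast
    ring

lemma aux_tail (m : ℕ) {u : ℝ} (h0 : 0 ≤ u) (h1 : u < 1) :
    |Real.log (1+u) - Real.log (1-u) - ∑ ℓ ∈ Finset.Icc 1 m, (2/(2*(ℓ:ℝ)-1)) * u^(2*ℓ-1)|
      ≤ 2*u^(2*m+1)/(1-u) := by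
  have hu : |u| < 1 := by rwa [abs_of_nonneg h0]
  have hnu : |(-u)| < 1 := by rwa [abs_neg, abs_of_nonneg h0]
  have A := Real.abs_log_sub_add_sum_range_le hu (2*m)
  have B := Real.abs_log_sub_add_sum_range_le hnu (2*m)
  rw [abs_of_nonneg h0] at A
  rw [abs_neg, abs_of_nonneg h0, show 1 - -u = 1 + u by ring] at B
  rw [← aux_sum_odd u m]
  have key : Real.log (1+u) - Real.log (1-u)
      - ∑ i ∈ Finset.range (2*m), (u^(i+1) - (-u)^(i+1))/((i:ℝ)+1)
      = ((∑ i ∈ Finset.range (2*m), (-u) ^ (i + 1) / ((i:ℝ) + 1)) + Real.log (1 + u))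
        - ((∑ i ∈ Finset.range (2*m), u ^ (i + 1) / ((i:ℝ) + 1)) + Real.log (1 - u)) := by
    simp only [sub_div, Finset.sum_sub_distrib]
    ring
  rw [key]
  calc |_ - _| ≤ |(∑ i ∈ Finset.range (2*m), (-u) ^ (i + 1) / ((i:ℝ) + 1)) + Real.log (1 + u)|
        + |(∑ i ∈ Finset.range (2*m), u ^ (i + 1) / ((i:ℝ) + 1)) + Real.log (1 - u)| :=
      abs_sub _ _
    _ ≤ u^(2*m+1)/(1-u) + u^(2*m+1)/(1-u) := add_le_add B A
    _ = 2*u^(2*m+1)/(1-u) := by ring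

lemma aux_cont {c : ℝ} (hc : (2:ℝ) ≤ c) (k : ℕ) :
    ContinuousOn (fun t : ℝ => 1/(Real.log t)^k) (Set.Ici c) := by
  apply ContinuousOn.div continuousOn_const
  · exact (Real.continuousOn_log.mono (fun t ht => by
      simp only [Set.mem_compl_iff, Set.mem_singleton_iff]
      have : (2:ℝ) ≤ t := le_trans hc ht
      positivity)).pow k
  · intro t ht
    have h1 : (0:ℝ) < Real.log t := Real.log_pos (by linarith [le_trans hc ht, Set.mem_Ici.mp ht])
    positivity

lemma aux_int (k : ℕ) (hk : 1 ≤ k) {a x : ℝ} (ha : 2 ≤ a) (hax : a ≤ x) :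
    ∫ t in a..x, 1/(Real.log t)^k ≤ ((2*(k:ℝ))^k/(Real.log 2)^k + 2^k) * (x / (Real.log x)^k) := by
  have hx2 : (2:ℝ) ≤ x := le_trans ha hax
  have hlx : 0 < Real.log x := Real.log_pos (by linarith)
  have hl2 : 0 < Real.log 2 := Real.log_pos (by norm_num)
  have hx0 : (0:ℝ) < x := by linarith
  have hsx : Real.sqrt x ≤ x := (Real.sqrt_le_left hx0.le).mpr (by nlinarith)
  set s := max a (Real.sqrt x) with hs
  have has : a ≤ s := le_max_left _ _
  have hsx2 : s ≤ x := max_le hax hsx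
  have hs2 : (2:ℝ) ≤ s := le_trans ha has
  have hcont := aux_cont (le_refl (2:ℝ)) k
  have I1 : IntervalIntegrable (fun t : ℝ => 1/(Real.log t)^k) MeasureTheory.volume a s :=
    (hcont.mono (by rw [Set.uIcc_of_le has]; exact fun t ht => le_trans ha ht.1)).intervalIntegrable
  have I2 : IntervalIntegrable (fun t : ℝ => 1/(Real.log t)^k) MeasureTheory.volume s x :=
    (hcont.mono (by rw [Set.uIcc_of_le hsx2]; exact fun t ht => le_trans hs2 ht.1)).intervalIntegrable
  rw [← intervalIntegral.integral_add_adjacent_intervals I1 I2]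
  have B1 : ∫ t in a..s, 1/(Real.log t)^k ≤ (s - a) * (1/(Real.log 2)^k) := by
    have := intervalIntegral.integral_mono_on has I1 intervalIntegrable_const
      (fun t ht => by
        have hlt : Real.log 2 ≤ Real.log t := Real.log_le_log (by norm_num) (le_trans ha ht.1)
        exact one_div_le_one_div_of_le (pow_pos hl2 k) (pow_le_pow_left₀ hl2.le hlt k))
    simpa [smul_eq_mul] using this
  have B2 : ∫ t in s..x, 1/(Real.log t)^k ≤ (x - s) * (2^k/(Real.log x)^k) := by
    have := intervalIntegral.integral_mono_on hsx2 I2 intervalIntegrable_const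
      (fun t ht => by
        have h0 : Real.sqrt x ≤ t := le_trans (le_max_right _ _) ht.1
        have hlt : Real.log x / 2 ≤ Real.log t := by
          rw [← Real.log_sqrt hx0.le]
          exact Real.log_le_log (Real.sqrt_pos.mpr hx0) h0
        have h2 : 1/(Real.log t)^k ≤ 1/(Real.log x / 2)^k :=
          one_div_le_one_div_of_le (by positivity) (pow_le_pow_left₀ (by positivity) hlt k)
        calc 1/(Real.log t)^k ≤ 1/(Real.log x / 2)^k := h2
          _ = 2^k/(Real.log x)^k := by rw [div_pow]; field_simp)
    calc ∫ t in s..x, 1/(Real.log t)^k ≤ ∫ _t in s..x, 2^k/(Real.log x)^k := this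
      _ = (x - s) * (2^k/(Real.log x)^k) := by rw [intervalIntegral.integral_const, smul_eq_mul]
  have hk0 : (0:ℝ) < k := by exact_mod_cast hk
  have hlog_rpow : (Real.log x)^k ≤ (2*(k:ℝ))^k * Real.sqrt x := by
    have h1 : Real.log x ≤ 2*(k:ℝ) * x^(1/(2*(k:ℝ))) := by
      have e : Real.log (x^(1/(2*(k:ℝ)))) = (1/(2*(k:ℝ))) * Real.log x := Real.log_rpow hx0 _
      have h2 : Real.log (x^(1/(2*(k:ℝ)))) ≤ x^(1/(2*(k:ℝ))) := by
        have := Real.log_le_sub_one_of_pos (Real.rpow_pos_of_pos hx0 (1/(2*(k:ℝ))))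
        linarith
      rw [e] at h2
      have e2 : Real.log x = 2*(k:ℝ) * ((1/(2*(k:ℝ))) * Real.log x) := by field_simp
      rw [e2]
      exact mul_le_mul_of_nonneg_left h2 (by positivity)
    calc (Real.log x)^k ≤ (2*(k:ℝ) * x^(1/(2*(k:ℝ))))^k := pow_le_pow_left₀ hlx.le h1 k
      _ = (2*(k:ℝ))^k * (x^(1/(2*(k:ℝ))))^k := mul_pow _ _ k
      _ = (2*(k:ℝ))^k * Real.sqrt x := by
          rw [← Real.rpow_natCast (x^(1/(2*(k:ℝ)))) k, ← Real.rpow_mul hx0.le,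
            show (1/(2*(k:ℝ))) * (k:ℝ) = 1/2 by field_simp, Real.sqrt_eq_rpow]
  have hsqrt_le : Real.sqrt x ≤ (2*(k:ℝ))^k * (x / (Real.log x)^k) := by
    rw [← mul_div_assoc, le_div_iff₀ (pow_pos hlx k)]
    have g1 := mul_le_mul_of_nonneg_left hlog_rpow (Real.sqrt_nonneg x)
    have g2 : Real.sqrt x * ((2*(k:ℝ))^k * Real.sqrt x) = (2*(k:ℝ))^k * x := by
      rw [show ((2*(k:ℝ))^k * x) = (2*(k:ℝ))^k * (Real.sqrt x * Real.sqrt x) by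
        rw [Real.mul_self_sqrt hx0.le]]
      ring
    linarith
  have f0 : s - a ≤ Real.sqrt x := by
    have : s ≤ a + Real.sqrt x := max_le (by linarith [Real.sqrt_nonneg x]) (by linarith)
    linarith
  have f1 : (s - a) * (1/(Real.log 2)^k) ≤ Real.sqrt x * (1/(Real.log 2)^k) :=
    mul_le_mul_of_nonneg_right f0 (by positivity)
  have f2 : (x - s) * (2^k/(Real.log x)^k) ≤ x * (2^k/(Real.log x)^k) :=
    mul_le_mul_of_nonneg_right (by linarith) (by positivity)
  have f3 : Real.sqrt x * (1/(Real.log 2)^k) ≤ ((2*(k:ℝ))^k * (x / (Real.log x)^k)) * (1/(Real.log 2)^k) :=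
    mul_le_mul_of_nonneg_right hsqrt_le (by positivity)
  have e : ((2*(k:ℝ))^k/(Real.log 2)^k + 2^k) * (x / (Real.log x)^k)
      = ((2*(k:ℝ))^k * (x / (Real.log x)^k)) * (1/(Real.log 2)^k) + x * (2^k/(Real.log x)^k) := by
    ring
  linarith

set_option maxHeartbeats 1000000 in
lemma aux_pointwise (m : ℕ) {r t : ℝ} (hr : 1 < r) (ht : 2*r ≤ t) :
    |(Real.log (Real.log (Real.sqrt (r*t))) - Real.log (Real.log (Real.sqrt (t/r))))/Real.log t
      - ∑ ℓ ∈ Finset.Icc 1 m, (2/(2*(ℓ:ℝ)-1)) * (Real.log r)^(2*ℓ-1) * (1/(Real.log t)^(2*ℓ))|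
    ≤ (2/Real.log 2) * Real.log (2*r) * (Real.log r)^(2*m+1) / (Real.log t)^(2*m+2) := by
  have hr0 : (0:ℝ) < r := by linarith
  have ht2 : (2:ℝ) < t := by nlinarith
  have ht0 : (0:ℝ) < t := by linarith
  have hl2 : (0:ℝ) < Real.log 2 := Real.log_pos (by norm_num)
  have hlr : (0:ℝ) < Real.log r := Real.log_pos hr
  have hlog2r : Real.log (2*r) = Real.log 2 + Real.log r := Real.log_mul (by norm_num) (ne_of_gt hr0)
  have hMle : Real.log (2*r) ≤ Real.log t := Real.log_le_log (by positivity) ht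
  set L := Real.log t with hL
  set c := Real.log r with hc
  have hcL : c < L := by rw [hL, hc]; linarith [hMle, hlog2r]
  have hL0 : 0 < L := by linarith
  set u := c / L with hu
  have hu0 : 0 < u := div_pos hlr hL0
  have hu1 : u < 1 := (div_lt_one hL0).mpr hcL
  -- log sqrt identities
  have hsq1 : Real.log (Real.sqrt (r*t)) = (1+u) * (L/2) := by
    rw [Real.log_sqrt (by positivity), Real.log_mul (ne_of_gt hr0) (ne_of_gt ht0), hu]
    field_simp
    ring
  have hsq2 : Real.log (Real.sqrt (t/r)) = (1-u) * (L/2) := by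
    rw [Real.log_sqrt (by positivity), Real.log_div (ne_of_gt ht0) (ne_of_gt hr0), hu]
    field_simp
    rw [hL, hc]
  have h1u : (0:ℝ) < 1 + u := by linarith
  have h1u' : (0:ℝ) < 1 - u := by linarith
  have e1 : Real.log (Real.log (Real.sqrt (r*t))) = Real.log (1+u) + Real.log (L/2) := by
    rw [hsq1, Real.log_mul (ne_of_gt h1u) (by positivity)]
  have e2 : Real.log (Real.log (Real.sqrt (t/r))) = Real.log (1-u) + Real.log (L/2) := by
    rw [hsq2, Real.log_mul (ne_of_gt h1u') (by positivity)]
  -- rewrite sum terms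
  have esum : ∀ ℓ ∈ Finset.Icc 1 m, (2/(2*(ℓ:ℝ)-1)) * c^(2*ℓ-1) * (1/L^(2*ℓ))
      = ((2/(2*(ℓ:ℝ)-1)) * u^(2*ℓ-1)) * (1/L) := by
    intro ℓ hℓ
    have h1 : 1 ≤ ℓ := (Finset.mem_Icc.mp hℓ).1
    have hpow : L^(2*ℓ) = L^(2*ℓ-1) * L := by
      rw [← pow_succ]
      congr 1
      omega
    rw [hu, div_pow, hpow]
    have hLn : L^(2*ℓ-1) ≠ 0 := by positivity
    field_simp
  -- main rewrite
  have emain : (Real.log (Real.log (Real.sqrt (r*t))) - Real.log (Real.log (Real.sqrt (t/r))))/L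
      - ∑ ℓ ∈ Finset.Icc 1 m, (2/(2*(ℓ:ℝ)-1)) * c^(2*ℓ-1) * (1/L^(2*ℓ))
      = (Real.log (1+u) - Real.log (1-u)
          - ∑ ℓ ∈ Finset.Icc 1 m, (2/(2*(ℓ:ℝ)-1)) * u^(2*ℓ-1)) * (1/L) := by
    rw [e1, e2, Finset.sum_congr rfl esum, ← Finset.sum_mul, sub_mul]
    ring
  rw [emain, abs_mul, abs_of_nonneg (by positivity : (0:ℝ) ≤ 1/L)]
  have htail := aux_tail m hu0.le hu1
  have hstep : 2*u^(2*m+1)/(1-u) * (1/L)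
      ≤ (2/Real.log 2) * Real.log (2*r) * c^(2*m+1) / L^(2*m+2) := by
    have hupow : u^(2*m+1) = c^(2*m+1)/L^(2*m+1) := by rw [hu, div_pow]
    have h1mu : 1 - u = (L - c)/L := by rw [hu]; field_simp
    have hLc : 0 < L - c := by linarith
    have elhs : 2*u^(2*m+1)/(1-u) * (1/L) = 2*c^(2*m+1) / (L^(2*m+1) * (L - c)) := by
      rw [hupow, h1mu]
      field_simp
    rw [elhs, hlog2r, div_le_div_iff₀ (by positivity) (by positivity)]
    have key : Real.log 2 * L ≤ (Real.log 2 + c) * (L - c) := by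
      have h2 : Real.log 2 + c ≤ L := by linarith [hMle, hlog2r]
      nlinarith [mul_nonneg hlr.le (sub_nonneg.mpr h2)]
    have h4 := mul_le_mul_of_nonneg_left key
      (show (0:ℝ) ≤ 2*c^(2*m+1)*L^(2*m+1) by positivity)
    have goal2 : 2*c^(2*m+1) * L^(2*m+2) * Real.log 2
        ≤ (2*(Real.log 2 + c)*c^(2*m+1)) * (L^(2*m+1)*(L-c)) := by
      calc 2*c^(2*m+1) * L^(2*m+2) * Real.log 2
          = (2*c^(2*m+1)*L^(2*m+1)) * (Real.log 2 * L) := by ring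
        _ ≤ (2*c^(2*m+1)*L^(2*m+1)) * ((Real.log 2 + c) * (L - c)) := h4
        _ = (2*(Real.log 2 + c)*c^(2*m+1)) * (L^(2*m+1)*(L-c)) := by ring
    have erhs : (2/Real.log 2 * (Real.log 2 + c) * c^(2*m+1)) * (L^(2*m+1) * (L-c))
        = ((2*(Real.log 2 + c)*c^(2*m+1)) * (L^(2*m+1)*(L-c)))/Real.log 2 := by ring
    rw [erhs, le_div_iff₀ hl2]
    exact goal2
  calc |Real.log (1+u) - Real.log (1-u)
          - ∑ ℓ ∈ Finset.Icc 1 m, (2/(2*(ℓ:ℝ)-1)) * u^(2*ℓ-1)| * (1/L)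
      ≤ 2*u^(2*m+1)/(1-u) * (1/L) := mul_le_mul_of_nonneg_right htail (by positivity)
    _ ≤ (2/Real.log 2) * Real.log (2*r) * c^(2*m+1) / L^(2*m+2) := hstep

set_option maxHeartbeats 1000000 in
theorem stmt_17 (m : ℕ) (hm : 1 ≤ m) :
    ∃ C : ℝ, 0 < C ∧ ∀ r : ℝ, 1 < r → ∀ x : ℝ, 2 * r ≤ x →
      |(∫ t in (2*r)..x,
            (Real.log (Real.log (Real.sqrt (r * t))) -
              Real.log (Real.log (Real.sqrt (t / r)))) / Real.log t) -
          ∑ ℓ ∈ Finset.Icc 1 m,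
            (2 / (2 * ℓ - 1 : ℝ)) * (Real.log r) ^ (2 * ℓ - 1) *
              ∫ t in (2*r)..x, 1 / (Real.log t) ^ (2 * ℓ)| ≤
        C * x * Real.log (2 * r) * (Real.log r) ^ (2 * m + 1) / (Real.log x) ^ (2 * m + 2) := by
  set k := 2*m+2 with hk
  refine ⟨(2/Real.log 2) * ((2*(k:ℝ))^k/(Real.log 2)^k + 2^k), by positivity, ?_⟩
  intro r hr x hax
  have hr0 : (0:ℝ) < r := by linarith
  have ha2 : (2:ℝ) < 2*r := by linarith
  have hx2 : (2:ℝ) < x := by linarith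
  have hl2 : (0:ℝ) < Real.log 2 := Real.log_pos (by norm_num)
  have hlr : (0:ℝ) < Real.log r := Real.log_pos hr
  have hl2r : (0:ℝ) < Real.log (2*r) := Real.log_pos (by linarith)
  have hlx : (0:ℝ) < Real.log x := Real.log_pos (by linarith)
  have hIcc : Set.uIcc (2*r) x = Set.Icc (2*r) x := Set.uIcc_of_le hax
  -- continuity of the main integrand
  have hfc : ContinuousOn (fun t : ℝ =>
      (Real.log (Real.log (Real.sqrt (r * t))) -
        Real.log (Real.log (Real.sqrt (t / r)))) / Real.log t) (Set.Icc (2*r) x) := by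
    have hb1 : ContinuousOn (fun t : ℝ => Real.sqrt (r*t)) (Set.Icc (2*r) x) :=
      (Real.continuous_sqrt.comp (continuous_const.mul continuous_id)).continuousOn
    have hb2 : ContinuousOn (fun t : ℝ => Real.sqrt (t/r)) (Set.Icc (2*r) x) :=
      (Real.continuous_sqrt.comp (continuous_id.div_const r)).continuousOn
    have hc1 : ContinuousOn (fun t : ℝ => Real.log (Real.log (Real.sqrt (r*t))))
        (Set.Icc (2*r) x) := by
      apply ContinuousOn.log
      · apply ContinuousOn.log hb1
        intro t ht
        have h1 : (0:ℝ) < r*t := by nlinarith [ht.1]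
        positivity
      · intro t ht
        have h1 : (1:ℝ) < r*t := by nlinarith [ht.1]
        have : (0:ℝ) < Real.log (Real.sqrt (r*t)) := by
          rw [Real.log_sqrt (by positivity)]
          have := Real.log_pos h1
          linarith
        exact ne_of_gt this
    have hc2 : ContinuousOn (fun t : ℝ => Real.log (Real.log (Real.sqrt (t/r))))
        (Set.Icc (2*r) x) := by
      apply ContinuousOn.log
      · apply ContinuousOn.log hb2
        intro t ht
        have h1 : (0:ℝ) < t/r := div_pos (by linarith [ht.1]) hr0
        positivity
      · intro t ht
        have h1 : (1:ℝ) < t/r := by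
          rw [lt_div_iff₀ hr0]
          nlinarith [ht.1]
        have : (0:ℝ) < Real.log (Real.sqrt (t/r)) := by
          rw [Real.log_sqrt (by positivity)]
          have := Real.log_pos h1
          linarith
        exact ne_of_gt this
    apply ContinuousOn.div (hc1.sub hc2)
    · exact Real.continuousOn_log.mono (fun t ht => by
        simp only [Set.mem_compl_iff, Set.mem_singleton_iff]
        have h2 : (0:ℝ) < t := by linarith [ht.1]
        exact ne_of_gt h2)
    · intro t ht
      exact ne_of_gt (Real.log_pos (by linarith [ht.1]))
  have hf_int : IntervalIntegrable (fun t : ℝ =>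
      (Real.log (Real.log (Real.sqrt (r * t))) -
        Real.log (Real.log (Real.sqrt (t / r)))) / Real.log t)
      MeasureTheory.volume (2*r) x := (hIcc ▸ hfc).intervalIntegrable
  -- integrability of each sum term
  have hg_int : ∀ ℓ ∈ Finset.Icc 1 m, IntervalIntegrable
      (fun t : ℝ => (2/(2*(ℓ:ℝ)-1)) * (Real.log r)^(2*ℓ-1) * (1/(Real.log t)^(2*ℓ)))
      MeasureTheory.volume (2*r) x := by
    intro ℓ _
    exact (((aux_cont ha2.le (2*ℓ)).mono (by rw [hIcc]; exact fun t ht => ht.1)).intervalIntegrable).const_mul _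
  have hsum_int : IntervalIntegrable
      (fun t : ℝ => ∑ ℓ ∈ Finset.Icc 1 m,
        (2/(2*(ℓ:ℝ)-1)) * (Real.log r)^(2*ℓ-1) * (1/(Real.log t)^(2*ℓ)))
      MeasureTheory.volume (2*r) x := by
    have hc : ContinuousOn (fun t : ℝ => ∑ ℓ ∈ Finset.Icc 1 m,
        (2/(2*(ℓ:ℝ)-1)) * (Real.log r)^(2*ℓ-1) * (1/(Real.log t)^(2*ℓ)))
        (Set.Icc (2*r) x) := by
      refine continuousOn_finset_sum _ (fun ℓ _ => ?_)
      exact continuousOn_const.mul ((aux_cont ha2.le (2*ℓ)).mono (fun t ht => ht.1))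
    exact (hIcc ▸ hc).intervalIntegrable
  -- rewrite the sum of integrals as a single integral
  have hrw : ∑ ℓ ∈ Finset.Icc 1 m,
      (2 / (2 * ℓ - 1 : ℝ)) * (Real.log r) ^ (2 * ℓ - 1) *
        ∫ t in (2*r)..x, 1 / (Real.log t) ^ (2 * ℓ)
      = ∫ t in (2*r)..x, ∑ ℓ ∈ Finset.Icc 1 m,
          (2/(2*(ℓ:ℝ)-1)) * (Real.log r)^(2*ℓ-1) * (1/(Real.log t)^(2*ℓ)) := by
    rw [intervalIntegral.integral_finset_sum hg_int]
    refine Finset.sum_congr rfl (fun ℓ _ => ?_)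
    rw [intervalIntegral.integral_const_mul]
  rw [hrw, ← intervalIntegral.integral_sub hf_int hsum_int]
  -- bound the integral
  set K := (2/Real.log 2) * Real.log (2*r) * (Real.log r)^(2*m+1) with hK
  have hK0 : 0 ≤ K := by positivity
  have hgb_int : IntervalIntegrable (fun t : ℝ => K * (1/(Real.log t)^k))
      MeasureTheory.volume (2*r) x :=
    (((aux_cont ha2.le k).mono (by rw [hIcc]; exact fun t ht => ht.1)).intervalIntegrable).const_mul _
  have hbound := intervalIntegral.norm_integral_le_of_norm_le
    (f := fun t : ℝ =>
      (Real.log (Real.log (Real.sqrt (r * t))) -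
        Real.log (Real.log (Real.sqrt (t / r)))) / Real.log t
      - ∑ ℓ ∈ Finset.Icc 1 m,
          (2/(2*(ℓ:ℝ)-1)) * (Real.log r)^(2*ℓ-1) * (1/(Real.log t)^(2*ℓ)))
    (g := fun t : ℝ => K * (1/(Real.log t)^k))
    (μ := MeasureTheory.volume) (a := 2*r) (b := x) hax
    (by
      refine Filter.Eventually.of_forall (fun t ht => ?_)
      rw [Real.norm_eq_abs]
      have := aux_pointwise m hr (le_of_lt ht.1)
      rw [hK, mul_one_div]
      exact this)
    hgb_int
  rw [Real.norm_eq_abs] at hbound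
  have hg_nonneg : ∀ t ∈ Set.Icc (2*r) x, (0:ℝ) ≤ K * (1/(Real.log t)^k) := by
    intro t _
    have h1 : (0:ℝ) ≤ (Real.log t)^k := by
      rw [hk, show 2*m+2 = 2*(m+1) by ring, pow_mul]
      positivity
    have h2 : (0:ℝ) ≤ 1/(Real.log t)^k := by positivity
    exact mul_nonneg hK0 h2
  have habs : |∫ t in (2*r)..x, K * (1/(Real.log t)^k)|
      = ∫ t in (2*r)..x, K * (1/(Real.log t)^k) :=
    abs_of_nonneg (intervalIntegral.integral_nonneg hax hg_nonneg)
  rw [intervalIntegral.integral_const_mul] at hbound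
  have hintle := aux_int k (by omega) ha2.le hax
  calc |∫ t in (2*r)..x,
        ((Real.log (Real.log (Real.sqrt (r * t))) -
          Real.log (Real.log (Real.sqrt (t / r)))) / Real.log t
        - ∑ ℓ ∈ Finset.Icc 1 m,
            (2/(2*(ℓ:ℝ)-1)) * (Real.log r)^(2*ℓ-1) * (1/(Real.log t)^(2*ℓ)))| ≤ K * ∫ t in (2*r)..x, 1/(Real.log t)^k := hbound
    _ ≤ K * (((2*(k:ℝ))^k/(Real.log 2)^k + 2^k) * (x / (Real.log x)^k)) :=
        mul_le_mul_of_nonneg_left hintle hK0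
    _ = (2/Real.log 2) * ((2*(k:ℝ))^k/(Real.log 2)^k + 2^k) * x * Real.log (2 * r)
          * (Real.log r) ^ (2 * m + 1) / (Real.log x) ^ k := by
        rw [hK]; ring
end
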